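/- For each NB-query Q there is a winning Prover strategy in the De Morgan game NB^DM from the initial state {Q^DM ↦ b, (¬Q)^DM ↦ b} with O(log s) rounds, where s is the number of maximal eNDT subformula occurrences in Q. -/

import Mathlib

/-- eNDT formulas. -/
inductive ENDT where
  | zero : ENDT
  | one : ENDT
  | dec : ENDT → ℕ → ENDT → ENDT
  | orf : ENDT → ENDT → ENDT
  | ext : ℕ → ENDT

/-- Strict upper bound on extension variable indices occurring in a formula. -/
def ENDT.extBound : ENDT → ℕ
  | .zero => 0
  | .one => 0
  | .dec A _ B => max A.extBound B.extBound
  | .orf A B => max A.extBound B.extBound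
  | .ext i => i + 1

/-- The propositional variable `p`, identified with the formula `0 p 1`. -/
def ENDT.pvar (p : ℕ) : ENDT := .dec .zero p .one

/-- The simulation judgement `A ≽_E B`. -/
inductive ENDT.Sim (E : ℕ → ENDT) : ENDT → ENDT → Prop
  | refl (A : ENDT) : ENDT.Sim E A A
  | dec {A B C D : ENDT} (p : ℕ) : ENDT.Sim E A C → ENDT.Sim E B D →
      ENDT.Sim E (.dec A p B) (.dec C p D)
  | orR {A C D : ENDT} : ENDT.Sim E A C → ENDT.Sim E A D → ENDT.Sim E A (.orf C D)
  | orL0 {A0 A1 B : ENDT} : ENDT.Sim E A0 B → ENDT.Sim E (.orf A0 A1) B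
  | orL1 {A0 A1 B : ENDT} : ENDT.Sim E A1 B → ENDT.Sim E (.orf A0 A1) B
  | extR {A : ENDT} (i : ℕ) : ENDT.Sim E A (E i) → ENDT.Sim E A (.ext i)
  | extL {B : ENDT} (i : ℕ) : ENDT.Sim E (E i) B → ENDT.Sim E (.ext i) B

/-- Queries of the game `NB`: Boolean combinations of eNDT formulas. -/
inductive BQuery where
  | base : ENDT → BQuery
  | not : BQuery → BQuery
  | or : BQuery → BQuery → BQuery
  | and : BQuery → BQuery → BQuery

/-- The simple contradictions of the game `NB` over extension axioms `E`. -/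
inductive NBContr (E : ℕ → ENDT) : Set (BQuery × Bool) → Prop
  | bool0 : NBContr E {(.base .zero, true)}
  | bool1 : NBContr E {(.base .one, false)}
  | decision (A0 A1 : ENDT) (p : ℕ) (i b0 b1 c : Bool) (h : c ≠ if i then b1 else b0) :
      NBContr E
        {(.base A0, b0), (.base A1, b1), (.base (ENDT.pvar p), i), (.base (.dec A0 p A1), c)}
  | notc (Q : BQuery) (b : Bool) : NBContr E {(.not Q, b), (Q, b)}
  | orc0 (Q0 Q1 : BQuery) : NBContr E {(.or Q0 Q1, false), (Q0, true)}
  | orc1 (Q0 Q1 : BQuery) : NBContr E {(.or Q0 Q1, false), (Q1, true)}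
  | orc2 (Q0 Q1 : BQuery) : NBContr E {(.or Q0 Q1, true), (Q0, false), (Q1, false)}
  | andc0 (Q0 Q1 : BQuery) : NBContr E {(.and Q0 Q1, true), (Q0, false)}
  | andc1 (Q0 Q1 : BQuery) : NBContr E {(.and Q0 Q1, true), (Q1, false)}
  | andc2 (Q0 Q1 : BQuery) : NBContr E {(.and Q0 Q1, false), (Q0, true), (Q1, true)}
  | extc (i : ℕ) (b : Bool) : NBContr E {(.base (.ext i), b), (.base (E i), !b)}
  | simc (A B : ENDT) (h : ENDT.Sim E A B) : NBContr E {(.base A, false), (.base B, true)}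

/-- Prover strategies: binary trees of queries. -/
inductive Strategy (Q : Type) where
  | leaf : Strategy Q
  | ask : Q → Strategy Q → Strategy Q → Strategy Q

/-- The depth (number of rounds) of a strategy. -/
def Strategy.depth {Q : Type} : Strategy Q → ℕ
  | .leaf => 0
  | .ask _ s0 s1 => max s0.depth s1.depth + 1

/-- `Wins IsContr Good σ S`: playing strategy `σ` from state `S`, every leaf state either
contains a simple contradiction (Prover wins) or satisfies `Good`. -/
def Wins {Q : Type} (IsContr : Set (Q × Bool) → Prop) (Good : Set (Q × Bool) → Prop) :
    Strategy Q → Set (Q × Bool) → Prop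
  | .leaf, S => (∃ t, IsContr t ∧ t ⊆ S) ∨ Good S
  | .ask q s0 s1, S =>
      Wins IsContr Good s0 (insert (q, false) S) ∧ Wins IsContr Good s1 (insert (q, true) S)

/-- Size of a query. -/
def qsize : BQuery → ℕ
  | .base _ => 1
  | .not Q => qsize Q + 1
  | .or Q R => qsize Q + qsize R + 1
  | .and Q R => qsize Q + qsize R + 1

/-- The De Morgan translation, pushing negations down to eNDT formulas. -/
def dm : BQuery → BQuery
  | .base A => .base A
  | .or Q R => .or (dm Q) (dm R)
  | .and Q R => .and (dm Q) (dm R)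
  | .not (.base A) => .not (.base A)
  | .not (.not Q) => dm Q
  | .not (.or Q R) => .and (dm (.not Q)) (dm (.not R))
  | .not (.and Q R) => .or (dm (.not Q)) (dm (.not R))
termination_by Q => qsize Q
decreasing_by all_goals (simp [qsize] <;> omega)

/-- De Morgan queries: negation occurs only directly in front of eNDT formulas. -/
def IsDM : BQuery → Prop
  | .base _ => True
  | .not (.base _) => True
  | .not _ => False
  | .or Q R => IsDM Q ∧ IsDM R
  | .and Q R => IsDM Q ∧ IsDM R

/-- A strategy of the game `NB^DM`: all queries asked are De Morgan queries. -/
def AllDM : Strategy BQuery → Prop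
  | .leaf => True
  | .ask q s0 s1 => IsDM q ∧ AllDM s0 ∧ AllDM s1

/-- The number of maximal eNDT subformula occurrences in a query. -/
def nleaves : BQuery → ℕ
  | .base _ => 1
  | .not Q => nleaves Q
  | .or Q R => nleaves Q + nleaves R
  | .and Q R => nleaves Q + nleaves R

/-!
If `S` gives `U^DM` and `(¬U)^DM` the same value, then at an `∨`/`∧` node four questions
(the translations of both children and of their negations) either hit a simple contradiction or
move this clash to a child; a clash at an eNDT formula is a contradiction outright. This gives
depth `O(s)`. For `O(log s)`, weigh `U` by its leaves, counting every subquery `R` that is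
already *resolved* (`R^DM` and `(¬R)^DM` known to differ) as a single leaf. By Spira's lemma
some `R` has between a third and two thirds of the weight; asking `R^DM` and `(¬R)^DM` either
moves the clash to `R` or resolves `R`. Either way the weight `w` drops to at most
`(2w + 2) / 3`, so `w - 2` shrinks by a factor `2/3` every two rounds.
-/

theorem isDM_dm (Q : BQuery) : IsDM (dm Q) := by
  induction Q using dm.induct <;> simp_all [dm, IsDM]

open Classical in
noncomputable def weight (F : Set BQuery) (U : BQuery) : ℕ :=
  if U ∈ F then 1 else
    match U with
    | .base _ => 1
    | .not V => weight F V
    | .or V W => weight F V + weight F W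
    | .and V W => weight F V + weight F W

section weight

variable {F G : Set BQuery}

theorem weight_of_mem {U : BQuery} (h : U ∈ F) : weight F U = 1 := by
  rw [weight.eq_def, if_pos h]

@[simp] theorem weight_base (A : ENDT) : weight F (.base A) = 1 := by
  rw [weight.eq_def]; split_ifs <;> rfl

theorem weight_not {V : BQuery} (h : .not V ∉ F) : weight F (.not V) = weight F V := by
  rw [weight.eq_def, if_neg h]

theorem weight_or {V W : BQuery} (h : .or V W ∉ F) :
    weight F (.or V W) = weight F V + weight F W := by
  rw [weight.eq_def, if_neg h]

theorem weight_and {V W : BQuery} (h : .and V W ∉ F) :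
    weight F (.and V W) = weight F V + weight F W := by
  rw [weight.eq_def, if_neg h]

theorem one_le_weight (U : BQuery) : 1 ≤ weight F U := by
  induction U with
  | base A => simp
  | not V ih => by_cases h : .not V ∈ F <;> simp [weight_of_mem, weight_not, *]
  | or V W ih _ => by_cases h : .or V W ∈ F <;> simp [weight_of_mem, weight_or, *]; omega
  | and V W ih _ => by_cases h : .and V W ∈ F <;> simp [weight_of_mem, weight_and, *]; omega

theorem weight_empty (U : BQuery) : weight ∅ U = nleaves U := by
  induction U <;> simp [weight_not, weight_or, weight_and, nleaves, *]

theorem weight_antitone (hFG : F ⊆ G) (U : BQuery) : weight G U ≤ weight F U := by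
  induction U with
  | base A => simp
  | not V ih =>
    by_cases hG : .not V ∈ G
    · exact (weight_of_mem hG).trans_le (one_le_weight _)
    rw [weight_not hG, weight_not fun h => hG (hFG h)]
    exact ih
  | or V W ih0 ih1 =>
    by_cases hG : .or V W ∈ G
    · exact (weight_of_mem hG).trans_le (one_le_weight _)
    rw [weight_or hG, weight_or fun h => hG (hFG h)]
    omega
  | and V W ih0 ih1 =>
    by_cases hG : .and V W ∈ G
    · exact (weight_of_mem hG).trans_le (one_le_weight _)
    rw [weight_and hG, weight_and fun h => hG (hFG h)]
    omega

theorem exists_balanced_of_pair {W : ℕ} {V0 V1 : BQuery} {P : BQuery → Prop}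
    (hV : 2 * W < 3 * (weight F V0 + weight F V1))
    (ih0 : W < 3 * weight F V0 →
      ∃ R, P R ∧ weight (insert R F) V0 + weight F R ≤ weight F V0 + 1)
    (ih1 : W < 3 * weight F V1 →
      ∃ R, P R ∧ weight (insert R F) V1 + weight F R ≤ weight F V1 + 1) :
    ∃ R, P R ∧ weight (insert R F) V0 + weight (insert R F) V1 + weight F R ≤
      weight F V0 + weight F V1 + 1 := by
  rcases le_total (weight F V1) (weight F V0) with h | h
  · obtain ⟨R, hR, hle⟩ := ih0 (by omega)
    have := weight_antitone (Set.subset_insert R F) V1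
    exact ⟨R, hR, by omega⟩
  · obtain ⟨R, hR, hle⟩ := ih1 (by omega)
    have := weight_antitone (Set.subset_insert R F) V0
    exact ⟨R, hR, by omega⟩

theorem not_mem_of_one_lt_weight {U : BQuery} (h : 1 < weight F U) : U ∉ F :=
  fun hU => by rw [weight_of_mem hU] at h; omega

theorem not_mem_insert_of_weight_lt {R U : BQuery} (h : weight F R < weight F U) :
    U ∉ insert R F := by
  rintro (rfl | hU)
  · exact h.false
  · rw [weight_of_mem hU] at h
    have := one_le_weight (F := F) R
    omega

/-- Spira's lemma. In the last conjunct, `insert R F` collapses `R` to a leaf of `U`. -/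
theorem exists_balanced_subquery {W : ℕ} (hW : 2 ≤ W) (U : BQuery) (hU : W < 3 * weight F U) :
    ∃ R, (W < 3 * weight F R ∧ 3 * weight F R ≤ 2 * W) ∧
      weight (insert R F) U + weight F R ≤ weight F U + 1 := by
  have hself : ∀ {U}, W < 3 * weight F U → 3 * weight F U ≤ 2 * W → ∃ R,
      (W < 3 * weight F R ∧ 3 * weight F R ≤ 2 * W) ∧
        weight (insert R F) U + weight F R ≤ weight F U + 1 := fun hU hle =>
    ⟨_, ⟨hU, hle⟩, by rw [weight_of_mem (Set.mem_insert _ F)]; omega⟩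
  induction U with
  | base A => exact hself hU (by simp; omega)
  | not V ih =>
    by_cases hle : 3 * weight F (.not V) ≤ 2 * W
    · exact hself hU hle
    have hUF : .not V ∉ F := not_mem_of_one_lt_weight (by omega)
    rw [weight_not hUF] at hU hle ⊢
    obtain ⟨R, hR, hsum⟩ := ih hU
    have hUR : .not V ∉ insert R F :=
      not_mem_insert_of_weight_lt (by rw [weight_not hUF]; omega)
    exact ⟨R, hR, by rwa [weight_not hUR]⟩
  | or V0 V1 ih0 ih1 =>
    by_cases hle : 3 * weight F (.or V0 V1) ≤ 2 * W
    · exact hself hU hle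
    have hUF : .or V0 V1 ∉ F := not_mem_of_one_lt_weight (by omega)
    rw [weight_or hUF] at hU hle ⊢
    obtain ⟨R, hR, hsum⟩ := exists_balanced_of_pair (by omega) ih0 ih1
    have hUR : .or V0 V1 ∉ insert R F :=
      not_mem_insert_of_weight_lt (by rw [weight_or hUF]; omega)
    exact ⟨R, hR, by rwa [weight_or hUR]⟩
  | and V0 V1 ih0 ih1 =>
    by_cases hle : 3 * weight F (.and V0 V1) ≤ 2 * W
    · exact hself hU hle
    have hUF : .and V0 V1 ∉ F := not_mem_of_one_lt_weight (by omega)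
    rw [weight_and hUF] at hU hle ⊢
    obtain ⟨R, hR, hsum⟩ := exists_balanced_of_pair (by omega) ih0 ih1
    have hUR : .and V0 V1 ∉ insert R F :=
      not_mem_insert_of_weight_lt (by rw [weight_and hUF]; omega)
    exact ⟨R, hR, by rwa [weight_and hUR]⟩

end weight

def resolved (S : Set (BQuery × Bool)) : Set BQuery :=
  {R | ∃ c, (dm R, c) ∈ S ∧ (dm (.not R), !c) ∈ S}

theorem resolved_mono {S T : Set (BQuery × Bool)} (h : S ⊆ T) : resolved S ⊆ resolved T :=
  fun _ ⟨c, hc, hnc⟩ => ⟨c, h hc, h hnc⟩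

theorem mul_two_pow_lt_three_pow_of_le {x y k : ℕ} (hxy : 3 * y ≤ 2 * x)
    (hx : x * 2 ^ (k + 1) < 3 ^ (k + 1)) : y * 2 ^ k < 3 ^ k := by
  have : 3 * (y * 2 ^ k) < 3 * 3 ^ k :=
    calc 3 * (y * 2 ^ k) = 3 * y * 2 ^ k := by ring
      _ ≤ 2 * x * 2 ^ k := Nat.mul_le_mul_right _ hxy
      _ = x * 2 ^ (k + 1) := by ring
      _ < 3 ^ (k + 1) := hx
      _ = 3 * 3 ^ k := by ring
  omega

def ProverWins (E : ℕ → ENDT) (d : ℕ) (S : Set (BQuery × Bool)) : Prop :=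
  ∃ σ : Strategy BQuery, AllDM σ ∧ σ.depth ≤ d ∧ Wins (NBContr E) (fun _ => False) σ S

namespace ProverWins

variable {E : ℕ → ENDT} {d : ℕ} {S : Set (BQuery × Bool)}

theorem mono_depth {d' : ℕ} (h : d ≤ d') : ProverWins E d S → ProverWins E d' S
  | ⟨σ, hσ, hdepth, hwin⟩ => ⟨σ, hσ, hdepth.trans h, hwin⟩

theorem of_contr {t : Set (BQuery × Bool)} (ht : NBContr E t) (htS : t ⊆ S) :
    ProverWins E d S :=
  ⟨.leaf, trivial, Nat.zero_le _, .inl ⟨t, ht, htS⟩⟩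

theorem ask {q : BQuery} (hq : IsDM q) (h : ∀ c, ProverWins E d (insert (q, c) S)) :
    ProverWins E (d + 1) S := by
  obtain ⟨σ0, hσ0, hdepth0, hwin0⟩ := h false
  obtain ⟨σ1, hσ1, hdepth1, hwin1⟩ := h true
  refine ⟨.ask q σ0 σ1, ⟨hq, hσ0, hσ1⟩, ?_, hwin0, hwin1⟩
  simp only [Strategy.depth]
  omega

theorem of_or {X0 X1 : BQuery} {b x0 x1 : Bool} (hor : (.or X0 X1, b) ∈ S)
    (hx0 : (X0, x0) ∈ S) (hx1 : (X1, x1) ∈ S) (hne : b ≠ (x0 || x1)) : ProverWins E d S := by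
  cases b <;> cases x0 <;> cases x1 <;> simp only [ne_eq, Bool.or_self, Bool.or_true,
    Bool.or_false, not_true_eq_false, reduceCtorEq, not_false_eq_true] at hne
  · exact of_contr (.orc1 X0 X1) (by simp [Set.insert_subset_iff, *])
  · exact of_contr (.orc0 X0 X1) (by simp [Set.insert_subset_iff, *])
  · exact of_contr (.orc0 X0 X1) (by simp [Set.insert_subset_iff, *])
  · exact of_contr (.orc2 X0 X1) (by simp [Set.insert_subset_iff, *])

theorem of_and {Y0 Y1 : BQuery} {b y0 y1 : Bool} (hand : (.and Y0 Y1, b) ∈ S)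
    (hy0 : (Y0, y0) ∈ S) (hy1 : (Y1, y1) ∈ S) (hne : b ≠ (y0 && y1)) : ProverWins E d S := by
  cases b <;> cases y0 <;> cases y1 <;> simp only [ne_eq, Bool.and_self, Bool.and_true,
    Bool.and_false, not_true_eq_false, reduceCtorEq, not_false_eq_true] at hne
  · exact of_contr (.andc2 Y0 Y1) (by simp [Set.insert_subset_iff, *])
  · exact of_contr (.andc0 Y0 Y1) (by simp [Set.insert_subset_iff, *])
  · exact of_contr (.andc0 Y0 Y1) (by simp [Set.insert_subset_iff, *])
  · exact of_contr (.andc1 Y0 Y1) (by simp [Set.insert_subset_iff, *])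

theorem of_clash {q : BQuery} (hq : IsDM q) (hfalse : (q, false) ∈ S) (htrue : (q, true) ∈ S) :
    ProverWins E 2 S := by
  have hmem : ∀ c, (q, c) ∈ S := Bool.forall_bool.2 ⟨hfalse, htrue⟩
  match q, hq with
  | .base A, _ => exact of_contr (.simc A A (.refl A)) (by simp [Set.insert_subset_iff, *])
  | .not (.base A), _ =>
    refine mono_depth (by omega) (ask (d := 0) (q := .base A) trivial fun c => ?_)
    exact of_contr (.notc (.base A) c) (by simp [Set.insert_subset_iff, hmem])
  | .or q0 q1, ⟨hq0, hq1⟩ =>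
    refine ask hq0 fun x0 => ask hq1 fun x1 => ?_
    exact of_or (.inr (.inr (hmem _))) (.inr (.inl rfl)) (.inl rfl) (Bool.not_ne_self _)
  | .and q0 q1, ⟨hq0, hq1⟩ =>
    refine ask hq0 fun y0 => ask hq1 fun y1 => ?_
    exact of_and (.inr (.inr (hmem _))) (.inr (.inl rfl)) (.inl rfl) (Bool.not_ne_self _)

theorem of_resolved {U : BQuery} {b : Bool} (hU : U ∈ resolved S) (hpos : (dm U, b) ∈ S)
    (hneg : (dm (.not U), b) ∈ S) : ProverWins E 2 S := by
  obtain ⟨c, hc, hnc⟩ := hU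
  cases b <;> cases c
  exacts [of_clash (isDM_dm _) hneg hnc, of_clash (isDM_dm _) hpos hc,
    of_clash (isDM_dm _) hc hpos, of_clash (isDM_dm _) hnc hneg]

theorem descend {X0 X1 Y0 Y1 : BQuery} {b : Bool} (hX0 : IsDM X0) (hX1 : IsDM X1)
    (hY0 : IsDM Y0) (hY1 : IsDM Y1) (hor : (.or X0 X1, b) ∈ S) (hand : (.and Y0 Y1, b) ∈ S)
    (h0 : ∀ T c, S ⊆ T → (X0, c) ∈ T → (Y0, c) ∈ T → ProverWins E d T)
    (h1 : ∀ T c, S ⊆ T → (X1, c) ∈ T → (Y1, c) ∈ T → ProverWins E d T) :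
    ProverWins E (d + 4) S := by
  refine ask hX0 fun x0 => ask hY0 fun y0 => ask hX1 fun x1 => ask hY1 fun y1 => ?_
  have hST : S ⊆ insert (Y1, y1) (insert (X1, x1) (insert (Y0, y0) (insert (X0, x0) S))) := by
    intro p hp; simp [hp]
  by_cases e0 : x0 = y0
  · exact h0 _ x0 hST (by simp) (by simp [e0])
  by_cases e1 : x1 = y1
  · exact h1 _ x1 hST (by simp) (by simp [e1])
  by_cases hb : b = (x0 || x1)
  · refine of_and (y0 := y0) (y1 := y1) (hST hand) (by simp) (by simp) ?_
    subst hb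
    revert e0 e1
    cases x0 <;> cases x1 <;> cases y0 <;> cases y1 <;> decide
  · exact of_or (hST hor) (by simp) (by simp) hb

theorem of_weight_le {U : BQuery} {n : ℕ} {b : Bool} (hw : weight (resolved S) U ≤ n + 1)
    (hpos : (dm U, b) ∈ S) (hneg : (dm (.not U), b) ∈ S) : ProverWins E (4 * n + 2) S := by
  induction U generalizing S n b with
  | base A =>
    simp only [dm] at hpos hneg
    exact of_contr (.notc (.base A) b) (by simp [Set.insert_subset_iff, *])
  | not V ih =>
    by_cases hres : .not V ∈ resolved S
    · exact mono_depth (by omega) (of_resolved hres hpos hneg)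
    rw [weight_not hres] at hw
    simp only [dm] at hneg
    exact ih hw hneg hpos
  | or V0 V1 ih0 ih1 =>
    by_cases hres : .or V0 V1 ∈ resolved S
    · exact mono_depth (by omega) (of_resolved hres hpos hneg)
    rw [weight_or hres] at hw
    simp only [dm] at hpos hneg
    have := one_le_weight (F := resolved S) V0
    have := one_le_weight (F := resolved S) V1
    obtain ⟨m, rfl⟩ : ∃ m, n = m + 1 := ⟨n - 1, by omega⟩
    refine mono_depth (by omega) (descend (d := 4 * m + 2) (isDM_dm _) (isDM_dm _)
      (isDM_dm _) (isDM_dm _) hpos hneg (fun T c hST hx hy => ?_) (fun T c hST hx hy => ?_))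
    · exact ih0 (by have := weight_antitone (resolved_mono hST) V0; omega) hx hy
    · exact ih1 (by have := weight_antitone (resolved_mono hST) V1; omega) hx hy
  | and V0 V1 ih0 ih1 =>
    by_cases hres : .and V0 V1 ∈ resolved S
    · exact mono_depth (by omega) (of_resolved hres hpos hneg)
    rw [weight_and hres] at hw
    simp only [dm] at hpos hneg
    have := one_le_weight (F := resolved S) V0
    have := one_le_weight (F := resolved S) V1
    obtain ⟨m, rfl⟩ : ∃ m, n = m + 1 := ⟨n - 1, by omega⟩
    refine mono_depth (by omega) (descend (d := 4 * m + 2) (isDM_dm _) (isDM_dm _)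
      (isDM_dm _) (isDM_dm _) hneg hpos (fun T c hST hx hy => ?_) (fun T c hST hx hy => ?_))
    · exact ih0 (by have := weight_antitone (resolved_mono hST) V0; omega) hy hx
    · exact ih1 (by have := weight_antitone (resolved_mono hST) V1; omega) hy hx

theorem of_weight_sub_two_mul_pow_lt (k : ℕ) {U : BQuery} {b : Bool}
    (hw : (weight (resolved S) U - 2) * 2 ^ k < 3 ^ k)
    (hpos : (dm U, b) ∈ S) (hneg : (dm (.not U), b) ∈ S) : ProverWins E (2 * k + 6) S := by
  induction k generalizing S U b with
  | zero => exact of_weight_le (n := 1) (by simp at hw; omega) hpos hneg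
  | succ k ih =>
    by_cases hsmall : weight (resolved S) U ≤ 2
    · exact mono_depth (by omega) (of_weight_le (n := 1) hsmall hpos hneg)
    obtain ⟨R, ⟨hR1, hR2⟩, hcollapse⟩ :=
      exists_balanced_subquery (F := resolved S) (W := weight (resolved S) U) (by omega) U
        (by omega)
    have hshrink : ∀ {V : BQuery} {T : Set (BQuery × Bool)},
        3 * (weight (resolved T) V - 2) ≤ 2 * (weight (resolved S) U - 2) →
        (weight (resolved T) V - 2) * 2 ^ k < 3 ^ k :=
      fun h => mul_two_pow_lt_three_pow_of_le h hw
    refine ask (isDM_dm R) fun r => ask (isDM_dm (.not R)) fun s => ?_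
    set T := insert (dm (.not R), s) (insert (dm R, r) S)
    have hST : S ⊆ T := fun _ hp => .inr (.inr hp)
    by_cases hrs : r = s
    · subst hrs
      have := weight_antitone (resolved_mono hST) R
      exact ih (hshrink (by omega)) (.inr (.inl rfl)) (.inl rfl)
    · have hR : R ∈ resolved T :=
        ⟨r, .inr (.inl rfl), .inl (by rw [Bool.eq_not.2 (Ne.symm hrs)])⟩
      have := weight_antitone (Set.insert_subset hR (resolved_mono hST)) U
      exact ih (hshrink (by omega)) (hST hpos) (hST hneg)

end ProverWins

theorem mul_four_pow_lt_nine_pow {s m : ℕ} (hs : s < 2 ^ m) : s * 2 ^ (2 * m) < 3 ^ (2 * m) :=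
  calc s * 2 ^ (2 * m) < 2 ^ m * 2 ^ (2 * m) := Nat.mul_lt_mul_of_pos_right hs (by positivity)
    _ = 8 ^ m := by rw [← pow_add, show m + 2 * m = 3 * m by ring, pow_mul]; norm_num
    _ ≤ 9 ^ m := Nat.pow_le_pow_left (by norm_num) m
    _ = 3 ^ (2 * m) := by rw [pow_mul]; norm_num

/-- Duality: for each NB-query `Q` there is a winning Prover strategy in `NB^DM` from
`{Q^DM ↦ b, (¬Q)^DM ↦ b}` using `O(log s)` rounds, where `s` is the number of maximal
eNDT subformula occurrences of `Q`. -/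
theorem duality_strategy :
    ∃ cst : ℕ, ∀ (E : ℕ → ENDT), (∀ i, (E i).extBound ≤ i) →
      ∀ (Q : BQuery) (b : Bool),
        ∃ σ : Strategy BQuery, AllDM σ ∧
          σ.depth ≤ cst * (Nat.log 2 (nleaves Q) + 1) ∧
          Wins (NBContr E) (fun _ => False) σ {(dm Q, b), (dm (.not Q), b)} := by
  refine ⟨10, fun E _ Q b => ?_⟩
  obtain ⟨m, hm, hleaves⟩ : ∃ m, m = Nat.log 2 (nleaves Q) + 1 ∧ nleaves Q < 2 ^ m :=
    ⟨_, rfl, Nat.lt_pow_succ_log_self one_lt_two _⟩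
  have hweight : weight (resolved {(dm Q, b), (dm (.not Q), b)}) Q - 2 < 2 ^ m := by
    have := weight_antitone (Set.empty_subset (resolved {(dm Q, b), (dm (.not Q), b)})) Q
    rw [weight_empty] at this
    omega
  obtain ⟨σ, hσ, hdepth, hwin⟩ := ProverWins.of_weight_sub_two_mul_pow_lt (E := E) (2 * m)
    (mul_four_pow_lt_nine_pow hweight) (.inl rfl) (.inr rfl)
  exact ⟨σ, hσ, hdepth.trans (by omega), hwin⟩
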